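/- arXiv:0912.1495 — 4 statements merged into one kernel-verified Lean document; each statement's English description precedes it below -/
import Mathlib

section
/- In the Lie algebra ℝ³ with the Euclidean cross product, the Tomihisa identity holds: for any five vectors F₁,...,F₅, [F₁, [[F₂,F₃],[F₄,F₅]]] + [F₃, [[F₂,F₅],[F₄,F₁]]] + [F₅, [[F₂,F₁],[F₄,F₃]]] = 0. -/
/-!
Write `[u, v, w] = u ⬝ᵥ v ⨯₃ w` and fix `x = F₂`, `y = F₄`. Expanding the vector triple
products, each summand `a ⨯₃ ((x ⨯₃ b) ⨯₃ (y ⨯₃ c))` becomes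
`[x, b, c] • (a ⨯₃ y) - (x ⨯₃ y ⬝ᵥ b) • (c ⨯₃ a)`. Summed cyclically over `(a, b, c)`, the two
parts are governed by the two classical identities of `R³`
`Σ [x, b, c] • a = [a, b, c] • x` and `Σ (w ⬝ᵥ a) • (b ⨯₃ c) = [a, b, c] • w`,
so both equal `[a, b, c] • (x ⨯₃ y)` and cancel.
-/

open Matrix

variable {R : Type*} [CommRing R]

theorem triple_product_smul_add_cyclic (a b c d : Fin 3 → R) :
    (d ⬝ᵥ b ⨯₃ c) • a + (d ⬝ᵥ c ⨯₃ a) • b + (d ⬝ᵥ a ⨯₃ b) • c = (a ⬝ᵥ b ⨯₃ c) • d := by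
  ext i
  fin_cases i <;> simp [cross_apply, vecHead, vecTail] <;> ring

theorem dotProduct_smul_cross_add_cyclic (a b c d : Fin 3 → R) :
    (d ⬝ᵥ a) • (b ⨯₃ c) + (d ⬝ᵥ b) • (c ⨯₃ a) + (d ⬝ᵥ c) • (a ⨯₃ b) = (a ⬝ᵥ b ⨯₃ c) • d := by
  ext i
  fin_cases i <;> simp [cross_apply, vec3_dotProduct, vecHead, vecTail] <;> ring

theorem cross_cross_cross_cross_eq_smul_sub_smul (a b c x y : Fin 3 → R) :
    a ⨯₃ (x ⨯₃ b ⨯₃ (y ⨯₃ c)) = (x ⬝ᵥ b ⨯₃ c) • (a ⨯₃ y) - (x ⨯₃ y ⬝ᵥ b) • (c ⨯₃ a) := by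
  have hc : x ⨯₃ b ⬝ᵥ c = x ⬝ᵥ b ⨯₃ c := by
    rw [dotProduct_comm, triple_product_permutation]
  have hy : y ⬝ᵥ x ⨯₃ b = -(x ⨯₃ y ⬝ᵥ b) := by
    rw [triple_product_permutation, triple_product_permutation, ← cross_anticomm, dotProduct_neg,
      dotProduct_comm]
  rw [cross_cross_eq_smul_sub_smul' (x ⨯₃ b), map_sub, map_smul, map_smul, hc, hy,
    ← cross_anticomm c a, neg_smul_neg]

theorem tomihisa_cross (a b c x y : Fin 3 → R) :
    a ⨯₃ (x ⨯₃ b ⨯₃ (y ⨯₃ c)) + b ⨯₃ (x ⨯₃ c ⨯₃ (y ⨯₃ a)) + c ⨯₃ (x ⨯₃ a ⨯₃ (y ⨯₃ b)) = 0 :=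
  calc _ = ((x ⬝ᵥ b ⨯₃ c) • a + (x ⬝ᵥ c ⨯₃ a) • b + (x ⬝ᵥ a ⨯₃ b) • c) ⨯₃ y -
        ((x ⨯₃ y ⬝ᵥ a) • (b ⨯₃ c) + (x ⨯₃ y ⬝ᵥ b) • (c ⨯₃ a) + (x ⨯₃ y ⬝ᵥ c) • (a ⨯₃ b)) := by
        simp only [cross_cross_cross_cross_eq_smul_sub_smul, map_add, map_smul,
          LinearMap.add_apply, LinearMap.smul_apply]
        abel
    _ = 0 := by
        rw [triple_product_smul_add_cyclic, dotProduct_smul_cross_add_cyclic, map_smul,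
          LinearMap.smul_apply, sub_self]

/-- Tomihisa identity for ℝ³ with the cross product. -/
theorem tomihisa_crossProduct (F₁ F₂ F₃ F₄ F₅ : Fin 3 → ℝ) :
    F₁ ⨯₃ ((F₂ ⨯₃ F₃) ⨯₃ (F₄ ⨯₃ F₅)) +
      F₃ ⨯₃ ((F₂ ⨯₃ F₅) ⨯₃ (F₄ ⨯₃ F₁)) +
      F₅ ⨯₃ ((F₂ ⨯₃ F₁) ⨯₃ (F₄ ⨯₃ F₃)) = 0 :=
  tomihisa_cross F₁ F₃ F₅ F₂ F₄
end

section
/- In the Lie algebra sl₂(ℝ), the Tomihisa identity holds: for any five elements F₁,...,F₅, [F₁, [[F₂,F₃],[F₄,F₅]]] + [F₃, [[F₂,F₅],[F₄,F₁]]] + [F₅, [[F₂,F₁],[F₄,F₃]]] = 0. -/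
set_option maxHeartbeats 2000000 in
/-- Tomihisa identity for sl₂(ℝ), the traceless 2×2 real matrices with the
commutator bracket. -/
theorem tomihisa_sl2 (F₁ F₂ F₃ F₄ F₅ : Matrix (Fin 2) (Fin 2) ℝ)
    (h₁ : Matrix.trace F₁ = 0) (h₂ : Matrix.trace F₂ = 0)
    (h₃ : Matrix.trace F₃ = 0) (h₄ : Matrix.trace F₄ = 0)
    (h₅ : Matrix.trace F₅ = 0) :
    ⁅F₁, ⁅⁅F₂, F₃⁆, ⁅F₄, F₅⁆⁆⁆ + ⁅F₃, ⁅⁅F₂, F₅⁆, ⁅F₄, F₁⁆⁆⁆ +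
      ⁅F₅, ⁅⁅F₂, F₁⁆, ⁅F₄, F₃⁆⁆⁆ = 0 := by
  simp only [Matrix.trace_fin_two] at h₁ h₂ h₃ h₄ h₅
  have e₁ : F₁ = !![F₁ 0 0, F₁ 0 1; F₁ 1 0, -F₁ 0 0] := by
    conv_lhs => rw [Matrix.eta_fin_two F₁]
    rw [show F₁ 1 1 = -F₁ 0 0 by linarith]
  have e₂ : F₂ = !![F₂ 0 0, F₂ 0 1; F₂ 1 0, -F₂ 0 0] := by
    conv_lhs => rw [Matrix.eta_fin_two F₂]
    rw [show F₂ 1 1 = -F₂ 0 0 by linarith]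
  have e₃ : F₃ = !![F₃ 0 0, F₃ 0 1; F₃ 1 0, -F₃ 0 0] := by
    conv_lhs => rw [Matrix.eta_fin_two F₃]
    rw [show F₃ 1 1 = -F₃ 0 0 by linarith]
  have e₄ : F₄ = !![F₄ 0 0, F₄ 0 1; F₄ 1 0, -F₄ 0 0] := by
    conv_lhs => rw [Matrix.eta_fin_two F₄]
    rw [show F₄ 1 1 = -F₄ 0 0 by linarith]
  have e₅ : F₅ = !![F₅ 0 0, F₅ 0 1; F₅ 1 0, -F₅ 0 0] := by
    conv_lhs => rw [Matrix.eta_fin_two F₅]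
    rw [show F₅ 1 1 = -F₅ 0 0 by linarith]
  rw [e₁, e₂, e₃, e₄, e₅]
  ext i j
  fin_cases i <;> fin_cases j <;>
    simp [Ring.lie_def, Matrix.mul_apply, Fin.sum_univ_two] <;> ring
end

section
/- In the Poisson algebra of binary quadratic forms ap² + 2bpq + cq² on the symplectic plane (with bracket {F,F'} = ∂_pF ∂_qF' - ∂_qF ∂_pF'), the Tomihisa identity {F₁,{{F₂,F₃},{F₄,F₅}}} + {F₃,{{F₂,F₅},{F₄,F₁}}} + {F₅,{{F₂,F₁},{F₄,F₃}}} = 0 holds for any five quadratic forms F₁,...,F₅. -/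
/-- Symplectic Poisson bracket on the plane (p,q):
{F,F'} = ∂_pF ∂_qF' - ∂_qF ∂_pF'. -/
noncomputable def symBracket (F G : ℝ → ℝ → ℝ) : ℝ → ℝ → ℝ := fun p q =>
  deriv (fun t => F t q) p * deriv (fun s => G p s) q -
    deriv (fun s => F p s) q * deriv (fun t => G t q) p

/-- A binary quadratic form ap² + 2bpq + cq². -/
def quadForm (a b c : ℝ) : ℝ → ℝ → ℝ := fun p q =>
  a * p ^ 2 + 2 * b * p * q + c * q ^ 2

/-! The Poisson bracket of two quadratic forms is again a quadratic form, with coefficients given by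
2 × 2 minors of the coefficient vectors (the forms span a copy of 𝔰𝔩₂(ℝ)). Rewriting every bracket
this way turns the identity into a polynomial identity in the fifteen coefficients. -/

lemma quadForm_swap (a b c p q : ℝ) : quadForm a b c p q = quadForm c b a q p := by
  unfold quadForm; ring

lemma hasDerivAt_quadForm_left (a b c p q : ℝ) :
    HasDerivAt (fun t => quadForm a b c t q) (2 * (a * p + b * q)) p := by
  have h := (((hasDerivAt_pow 2 p).const_mul a).add
    (((hasDerivAt_id p).const_mul (2 * b)).mul_const q)).add_const (c * q ^ 2)
  exact h.congr_deriv (by simp; ring)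

lemma deriv_quadForm_left (a b c p q : ℝ) :
    deriv (fun t => quadForm a b c t q) p = 2 * (a * p + b * q) :=
  (hasDerivAt_quadForm_left a b c p q).deriv

lemma deriv_quadForm_right (a b c p q : ℝ) :
    deriv (fun s => quadForm a b c p s) q = 2 * (b * p + c * q) := by
  simp only [quadForm_swap a b c p, deriv_quadForm_left]; ring

lemma symBracket_quadForm (a b c a' b' c' : ℝ) :
    symBracket (quadForm a b c) (quadForm a' b' c') =
      quadForm (4 * (a * b' - b * a')) (2 * (a * c' - c * a')) (4 * (b * c' - c * b')) := by
  funext p q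
  simp only [symBracket, deriv_quadForm_left, deriv_quadForm_right]
  unfold quadForm
  ring

/-- Tomihisa identity in the Poisson algebra of binary quadratic forms. -/
theorem tomihisa_quadForms (a₁ b₁ c₁ a₂ b₂ c₂ a₃ b₃ c₃ a₄ b₄ c₄ a₅ b₅ c₅ : ℝ) :
    ∀ p q : ℝ,
      symBracket (quadForm a₁ b₁ c₁)
          (symBracket (symBracket (quadForm a₂ b₂ c₂) (quadForm a₃ b₃ c₃))
            (symBracket (quadForm a₄ b₄ c₄) (quadForm a₅ b₅ c₅))) p q +
      symBracket (quadForm a₃ b₃ c₃)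
          (symBracket (symBracket (quadForm a₂ b₂ c₂) (quadForm a₅ b₅ c₅))
            (symBracket (quadForm a₄ b₄ c₄) (quadForm a₁ b₁ c₁))) p q +
      symBracket (quadForm a₅ b₅ c₅)
          (symBracket (symBracket (quadForm a₂ b₂ c₂) (quadForm a₁ b₁ c₁))
            (symBracket (quadForm a₄ b₄ c₄) (quadForm a₃ b₃ c₃))) p q = 0 := by
  intro p q
  simp only [symBracket_quadForm]
  unfold quadForm
  ring
end

section
/- In any Lie algebra in which the Tomihisa identity T(X₀,X₁;X₂,X₃,X₄) := [X₂,[[X₁,X₃],[X₀,X₄]]] + [X₃,[[X₁,X₄],[X₀,X₂]]] + [X₄,[[X₁,X₂],[X₀,X₃]]] = 0 holds for all elements, the degree-5 standard identity Σ_{s ∈ S₄} sign(s) [X_{s(1)}, [X_{s(2)}, [X_{s(3)}, [X_{s(4)}, X₀]]]] = 0 also holds; specifically, the sum over S₄ equals T(X₀,X₁;X₂,X₃,X₄) + T(X₀,X₂;X₃,X₁,X₄) + T(X₀,X₃;X₁,X₂,X₄) + T(X₀,X₄;X₂,X₁,X₃). -/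
open Finset

variable {L : Type*}

/-- The Tomihisa expression T(X₀,X₁;Y₁,Y₂,Y₃): the cyclic sum over (Y₁,Y₂,Y₃)
of ⁅Yᵢ, ⁅⁅X₁,Yⱼ⁆, ⁅X₀,Y_k⁆⁆⁆. -/
def tomihisaT [LieRing L] (X₀ X₁ Y₁ Y₂ Y₃ : L) : L :=
  ⁅Y₁, ⁅⁅X₁, Y₂⁆, ⁅X₀, Y₃⁆⁆⁆ + ⁅Y₂, ⁅⁅X₁, Y₃⁆, ⁅X₀, Y₁⁆⁆⁆ +
    ⁅Y₃, ⁅⁅X₁, Y₁⁆, ⁅X₀, Y₂⁆⁆⁆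

lemma perm_sum_succ {n : ℕ} {M : Type*} [AddCommMonoid M] (f : Equiv.Perm (Fin (n+1)) → M) :
    ∑ s, f s = ∑ i : Fin (n+1), ∑ e : Equiv.Perm (Fin n),
      f (Equiv.Perm.decomposeFin.symm (i, e)) := by
  rw [← Equiv.sum_comp (Equiv.Perm.decomposeFin.symm) f, Fintype.sum_prod_type]

/-- If the Tomihisa identity holds in a Lie ring, then the degree-5 standard
identity Σ_{s∈S₄} sign(s)[X_{s(1)},[X_{s(2)},[X_{s(3)},[X_{s(4)},X₀]]]] = 0
holds; in fact the sum over S₄ equals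
T(X₀,X₁;X₂,X₃,X₄) + T(X₀,X₂;X₃,X₁,X₄) + T(X₀,X₃;X₁,X₂,X₄) + T(X₀,X₄;X₂,X₁,X₃). -/
theorem standard_identity_of_tomihisa [LieRing L]
    (hT : ∀ A B Y₁ Y₂ Y₃ : L, tomihisaT A B Y₁ Y₂ Y₃ = 0)
    (X₀ X₁ X₂ X₃ X₄ : L) :
    (∑ s : Equiv.Perm (Fin 4),
        (Equiv.Perm.sign s : ℤ) •
          ⁅![X₁, X₂, X₃, X₄] (s 0), ⁅![X₁, X₂, X₃, X₄] (s 1),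
            ⁅![X₁, X₂, X₃, X₄] (s 2), ⁅![X₁, X₂, X₃, X₄] (s 3), X₀⁆⁆⁆⁆)
      = tomihisaT X₀ X₁ X₂ X₃ X₄ + tomihisaT X₀ X₂ X₃ X₁ X₄ +
          tomihisaT X₀ X₃ X₁ X₂ X₄ + tomihisaT X₀ X₄ X₂ X₁ X₃ ∧
    (∑ s : Equiv.Perm (Fin 4),
        (Equiv.Perm.sign s : ℤ) •
          ⁅![X₁, X₂, X₃, X₄] (s 0), ⁅![X₁, X₂, X₃, X₄] (s 1),
            ⁅![X₁, X₂, X₃, X₄] (s 2), ⁅![X₁, X₂, X₃, X₄] (s 3), X₀⁆⁆⁆⁆) = 0 := by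
  have h0 : ∀ y : L, ⁅X₀, y⁆ = -⁅y, X₀⁆ := fun y => by rw [← lie_skew y X₀, neg_neg]
  have key : (∑ s : Equiv.Perm (Fin 4),
        (Equiv.Perm.sign s : ℤ) •
          ⁅![X₁, X₂, X₃, X₄] (s 0), ⁅![X₁, X₂, X₃, X₄] (s 1),
            ⁅![X₁, X₂, X₃, X₄] (s 2), ⁅![X₁, X₂, X₃, X₄] (s 3), X₀⁆⁆⁆⁆)
      = tomihisaT X₀ X₁ X₂ X₃ X₄ + tomihisaT X₀ X₂ X₃ X₁ X₄ +
          tomihisaT X₀ X₃ X₁ X₂ X₄ + tomihisaT X₀ X₄ X₂ X₁ X₃ := by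
    rw [perm_sum_succ]
    simp only [perm_sum_succ, Fin.sum_univ_succ, Fin.sum_univ_zero, Fintype.sum_unique,
      show (1 : Fin 4) = (0 : Fin 3).succ from rfl,
      show (2 : Fin 4) = (1 : Fin 3).succ from rfl,
      show (3 : Fin 4) = (2 : Fin 3).succ from rfl,
      show (1 : Fin 3) = (0 : Fin 2).succ from rfl,
      show (2 : Fin 3) = (1 : Fin 2).succ from rfl,
      show (1 : Fin 2) = (0 : Fin 1).succ from rfl,
      Equiv.Perm.decomposeFin_symm_apply_zero, Equiv.Perm.decomposeFin_symm_apply_succ,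
      Equiv.Perm.decomposeFin.symm_sign]
    simp [Equiv.swap_apply_def, Fin.succ_ne_zero,
      show (Fin.succ 2 : Fin 4) = 3 from rfl, show (Fin.succ 1 : Fin 4) = 2 from rfl,
      show (Fin.succ 0 : Fin 4) = 1 from rfl,
      show (Fin.succ 1 : Fin 3) = 2 from rfl, show (Fin.succ 0 : Fin 3) = 1 from rfl,
      show (Fin.succ 0 : Fin 2) = 1 from rfl]
    simp only [tomihisaT, h0, lie_lie, lie_neg, neg_lie, lie_sub, sub_lie, lie_add, add_lie,
      neg_neg, neg_sub, sub_neg_eq_add]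
    abel
  exact ⟨key, by rw [key]; simp [hT]⟩
end
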